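/- arXiv:0910.5651 — 3 statements merged into one kernel-verified Lean document; each statement's English description precedes it below -/
import Mathlib

section
/- Let G be a connected graph with more than one end in which every block (maximal 2-connected subgraph or bridge) is a complete graph on κ vertices and every vertex lies in exactly λ blocks, with κ,λ≥2 cardinals. Then G is vertex-transitive. -/
/-!
Let `Bₙ(u)` arise from `{u}` by adding, `n` times, every block that meets the current set
without lying in it; by connectivity these balls exhaust `G`. A bijection `Bₙ(u) → Bₙ(v)`
mapping blocks to blocks extends to `Bₙ₊₁(u) → Bₙ₊₁(v)`: at each vertex `x` of the ball either
all blocks through `x` lie inside the ball or at most one does, the same holds at the image of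
`x`, so equally many of the `λ` blocks through `x` and through its image leave the balls.
Matching these blocks, and then their `κ - 1` new vertices, gives the extension, and since
blocks are cliques the union of the chain is an automorphism sending `u` to `v`.
-/

open Cardinal

/-- `B` induces a connected subgraph with no cutvertex. -/
def NoCutvertexConn {V : Type*} (G : SimpleGraph V) (B : Set V) : Prop :=
  (G.induce B).Connected ∧
    ∀ v ∈ B, (B \ {v}).Nonempty → (G.induce (B \ {v})).Connected

/-- `B` is a block of `G`: a maximal connected subgraph without a cutvertex. -/
def IsBlock {V : Type*} (G : SimpleGraph V) (B : Set V) : Prop :=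
  NoCutvertexConn G B ∧ ∀ C : Set V, B ⊆ C → NoCutvertexConn G C → B = C

section

open Set SimpleGraph

universe u

variable {V : Type*} {G : SimpleGraph V}

theorem exists_isPath_support_subset {T : Set V} (hT : (G.induce T).Connected) {a b : V}
    (ha : a ∈ T) (hb : b ∈ T) : ∃ p : G.Walk a b, p.IsPath ∧ ∀ c ∈ p.support, c ∈ T := by
  classical
  obtain ⟨q⟩ := hT ⟨a, ha⟩ ⟨b, hb⟩
  have hq : ∀ c ∈ (q.map (Embedding.induce T).toHom).support, c ∈ T := by
    intro c hc
    rw [Walk.support_map] at hc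
    obtain ⟨⟨c, hcT⟩, _, rfl⟩ := List.mem_map.mp hc
    exact hcT
  exact ⟨_, Walk.bypass_isPath _, fun c hc => hq c (Walk.support_bypass_subset_support _ hc)⟩

theorem induce_singleton_connected (v : V) : (G.induce {v}).Connected := by
  rw [induce_singleton_eq_top]
  exact connected_top

theorem SimpleGraph.Walk.IsPath.notMem_takeUntil_or_notMem_dropUntil [DecidableEq V]
    {a b w v : V} {p : G.Walk a b} (hp : p.IsPath) (hw : w ∈ p.support) (hvw : v ≠ w) :
    v ∉ (p.takeUntil w hw).support ∨ v ∉ (p.dropUntil w hw).support := by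
  by_contra! ⟨h₁, h₂⟩
  have hnodup := hp.support_nodup
  rw [← p.take_spec hw, Walk.support_append, List.nodup_append] at hnodup
  rw [← Walk.cons_tail_support, List.mem_cons] at h₂
  exact hnodup.2.2 v h₁ v (h₂.resolve_left hvw) rfl

namespace NoCutvertexConn

theorem connected_sdiff_singleton {B : Set V} (h : NoCutvertexConn G B) (hnt : B.Nontrivial)
    (v : V) : (G.induce (B \ {v})).Connected := by
  by_cases hv : v ∈ B
  · obtain ⟨w, hw, hwv⟩ := hnt.exists_ne v
    exact h.2 v hv ⟨w, hw, hwv⟩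
  · rw [sdiff_singleton_eq_self hv]
    exact h.1

theorem sUnion {c : Set (Set V)} (hc : c.Nonempty) {x y : V} (hxy : x ≠ y)
    (h : ∀ s ∈ c, NoCutvertexConn G s ∧ x ∈ s ∧ y ∈ s) : NoCutvertexConn G (⋃₀ c) := by
  refine ⟨induce_sUnion_connected_of_pairwise_not_disjoint hc
    (fun hs ht => ⟨x, (h _ hs).2.1, (h _ ht).2.1⟩) (fun hs => (h _ hs).1.1), fun v _ _ => ?_⟩
  obtain ⟨z, hz, hzv⟩ : ∃ z, (∀ s ∈ c, z ∈ s) ∧ z ≠ v := by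
    rcases eq_or_ne x v with rfl | hxv
    · exact ⟨y, fun s hs => (h s hs).2.2, hxy.symm⟩
    · exact ⟨x, fun s hs => (h s hs).2.1, hxv⟩
  have hdiff : (⋃₀ c) \ {v} = ⋃₀ ((· \ {v}) '' c) := by
    ext
    simp only [mem_sdiff, mem_sUnion, sUnion_image, mem_iUnion, exists_prop]
    tauto
  rw [hdiff]
  refine induce_sUnion_connected_of_pairwise_not_disjoint (hc.image _) ?_ ?_
  · rintro _ _ ⟨s, hs, rfl⟩ ⟨t, ht, rfl⟩
    exact ⟨z, ⟨hz s hs, hzv⟩, hz t ht, hzv⟩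
  · rintro _ ⟨s, hs, rfl⟩
    exact (h s hs).1.connected_sdiff_singleton ⟨x, (h s hs).2.1, y, (h s hs).2.2, hxy⟩ v

theorem union_support {B : Set V} (hB : NoCutvertexConn G B) (hnt : B.Nontrivial) {a b : V}
    (ha : a ∈ B) (hb : b ∈ B) {p : G.Walk a b} (hp : p.IsPath) :
    NoCutvertexConn G (B ∪ {c | c ∈ p.support}) := by
  classical
  refine ⟨induce_union_connected hB.1.preconnected p.connected_induce_support.preconnected
    ⟨a, ha, p.start_mem_support⟩, fun v _ _ => ?_⟩
  have hBv := hB.connected_sdiff_singleton hnt v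
  obtain ⟨⟨u₀, hu₀⟩⟩ := hBv.nonempty
  refine induce_connected_of_patches u₀ ⟨Or.inl hu₀.1, hu₀.2⟩ ?_
  rintro w ⟨hw | hw, hwv : w ≠ v⟩
  · exact ⟨B \ {v}, fun c hc => ⟨Or.inl hc.1, hc.2⟩, hu₀, ⟨hw, hwv⟩, hBv.preconnected _ _⟩
  -- the part of `p` before or after `w` avoids `v`, since `p` is a path
  obtain ⟨c, hc, q, hvq, hqp⟩ : ∃ c ∈ B \ {v}, ∃ q : G.Walk c w, v ∉ q.support ∧
      ∀ d ∈ q.support, d ∈ p.support := by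
    rcases hp.notMem_takeUntil_or_notMem_dropUntil hw hwv.symm with h | h
    · exact ⟨a, ⟨ha, fun hav => h (hav ▸ Walk.start_mem_support _)⟩, _, h,
        fun d hd => p.support_takeUntil_subset_support hw hd⟩
    · refine ⟨b, ⟨hb, fun hbv => h (hbv ▸ Walk.end_mem_support _)⟩, (p.dropUntil w hw).reverse,
        by simpa using h, fun d hd => p.support_dropUntil_subset_support hw (by simpa using hd)⟩
  refine ⟨(B \ {v}) ∪ {d | d ∈ q.support}, ?_, Or.inl hu₀, Or.inr q.end_mem_support,
    (induce_union_connected hBv.preconnected q.connected_induce_support.preconnected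
      ⟨c, hc, q.start_mem_support⟩).preconnected _ _⟩
  rintro d (hd | hd)
  · exact ⟨Or.inl hd.1, hd.2⟩
  · exact ⟨Or.inr (hqp d hd), fun hdv => hvq (hdv ▸ hd)⟩

end NoCutvertexConn

namespace IsBlock

theorem support_subset {B : Set V} (hB : IsBlock G B) (hnt : B.Nontrivial) {a b : V}
    (ha : a ∈ B) (hb : b ∈ B) {p : G.Walk a b} (hp : p.IsPath) : ∀ c ∈ p.support, c ∈ B := by
  rw [hB.2 _ subset_union_left (hB.1.union_support hnt ha hb hp)]
  exact fun c hc => Or.inr hc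

theorem eq_of_mem_of_mem {B C : Set V} (hB : IsBlock G B) (hC : IsBlock G C) {p q : V}
    (hpB : p ∈ B) (hpC : p ∈ C) (hqB : q ∈ B) (hqC : q ∈ C) (hpq : p ≠ q) : B = C := by
  have hBC : NoCutvertexConn G (B ∪ C) := by
    rw [← sUnion_pair]
    refine NoCutvertexConn.sUnion (insert_nonempty _ _) hpq ?_
    rintro s (rfl | rfl)
    exacts [⟨hB.1, hpB, hqB⟩, ⟨hC.1, hpC, hqC⟩]
  exact (hB.2 _ subset_union_left hBC).trans (hC.2 _ subset_union_right hBC).symm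

/-- The edge `zw` followed by a path inside `T` from `w` to `x` is a path between two vertices
of `D`, hence stays in `D`. -/
theorem mem_of_adj {D T : Set V} (hD : IsBlock G D) (hT : (G.induce T).Connected) {x z w : V}
    (hxD : x ∈ D) (hxT : x ∈ T) (hzD : z ∈ D) (hzT : z ∉ T) (hwT : w ∈ T) (hzw : G.Adj z w) :
    w ∈ D := by
  obtain ⟨p, hp, hpT⟩ := exists_isPath_support_subset hT hwT hxT
  have hzp : (Walk.cons hzw p).IsPath := hp.cons fun h => hzT (hpT z h)
  exact hD.support_subset ⟨z, hzD, x, hxD, fun h => hzT (h ▸ hxT)⟩ hzD hxD hzp w (by simp)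

end IsBlock

theorem exists_isBlock_of_adj {x y : V} (hxy : G.Adj x y) :
    ∃ B, IsBlock G B ∧ x ∈ B ∧ y ∈ B := by
  have hseed : NoCutvertexConn G {x, y} := by
    refine ⟨induce_pair_connected_of_adj hxy, ?_⟩
    rintro v (rfl | rfl) -
    · rw [pair_sdiff_left hxy.ne]
      exact induce_singleton_connected y
    · rw [pair_sdiff_right hxy.ne]
      exact induce_singleton_connected x
  obtain ⟨m, hxym, hmax⟩ := zorn_subset_nonempty {C | NoCutvertexConn G C ∧ x ∈ C ∧ y ∈ C}
    (fun c hc _ hne => ⟨⋃₀ c, ⟨NoCutvertexConn.sUnion hne hxy.ne fun s hs => hc hs,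
      hne.elim fun s hs => ⟨mem_sUnion_of_mem (hc hs).2.1 hs, mem_sUnion_of_mem (hc hs).2.2 hs⟩⟩,
      fun s hs => subset_sUnion_of_mem hs⟩) {x, y} ⟨hseed, by simp, by simp⟩
  refine ⟨m, ⟨hmax.1.1, fun C hmC hC => ?_⟩, hmax.1.2⟩
  exact hmC.antisymm (hmax.2 ⟨hC, hmC hmax.1.2.1, hmC hmax.1.2.2⟩ hmC)

theorem mk_sdiff_eq_mk_sdiff {α β : Type u} {s s' : Set α} {t t' : Set β} (h : #s = #t)
    (hs : (s ∩ s').Subsingleton) (ht : (t ∩ t').Subsingleton)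
    (hst : (s ∩ s').Nonempty ↔ (t ∩ t').Nonempty) : #↥(s \ s') = #↥(t \ t') := by
  have hinter : #↥(s ∩ s') = #↥(t ∩ t') := by
    rcases (s ∩ s').eq_empty_or_nonempty with h₀ | ⟨a, ha⟩
    · rw [h₀, not_nonempty_iff_eq_empty.mp (mt hst.mpr (not_nonempty_iff_eq_empty.mpr h₀)),
        mk_eq_zero, mk_eq_zero]
    · obtain ⟨b, hb⟩ := hst.mp ⟨a, ha⟩
      rw [hs.eq_singleton_of_mem ha, ht.eq_singleton_of_mem hb, mk_singleton, mk_singleton]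
  have hfin : #↥(t ∩ t') < ℵ₀ := (mk_le_one_iff_set_subsingleton.mpr ht).trans_lt one_lt_aleph0
  refine (add_right_inj_of_lt_aleph0 hfin).mp ?_
  calc #↥(s \ s') + #↥(t ∩ t') = #↥(s \ (s ∩ s')) + #↥(s ∩ s') := by rw [sdiff_self_inter, hinter]
    _ = #↥(t \ (t ∩ t')) + #↥(t ∩ t') := by
      rw [mk_sdiff_add_mk inter_subset_left, mk_sdiff_add_mk inter_subset_left, h]
    _ = #↥(t \ t') + #↥(t ∩ t') := by rw [sdiff_self_inter]

theorem exists_bijOn_of_mk_eq {α β : Type u} [Nonempty β] {s : Set α} {t : Set β}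
    (h : #s = #t) : ∃ g : α → β, BijOn g s t := by
  classical
  obtain ⟨e⟩ := Cardinal.eq.mp h
  refine ⟨fun a => if ha : a ∈ s then (e ⟨a, ha⟩ : β) else Classical.arbitrary β, ?_, ?_, ?_⟩
  · intro a ha
    simp only [dif_pos ha]
    exact (e _).2
  · intro a ha b hb hab
    simp only [dif_pos ha, dif_pos hb] at hab
    exact congrArg Subtype.val (e.injective (Subtype.ext hab))
  · intro y hy
    exact ⟨e.symm ⟨y, hy⟩, (e.symm ⟨y, hy⟩).2, by simp⟩

theorem exists_bijOn_sdiff_singleton {α β : Type u} {s : Set α} {t : Set β} (h : #s = #t)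
    {a : α} {b : β} (ha : a ∈ s) (hb : b ∈ t) : ∃ g : α → β, BijOn g (s \ {a}) (t \ {b}) :=
  haveI : Nonempty β := ⟨b⟩
  exists_bijOn_of_mk_eq <| mk_sdiff_eq_mk_sdiff h (subsingleton_singleton.anti inter_subset_right)
    (subsingleton_singleton.anti inter_subset_right) ⟨fun _ => ⟨b, hb, rfl⟩, fun _ => ⟨a, ha, rfl⟩⟩

theorem exists_forall_bijOn {ι α β : Type*} [Nonempty β] {s : ι → Set α} {t : ι → Set β}
    (hs : Pairwise fun i j => Disjoint (s i) (s j)) (h : ∀ i, ∃ g : α → β, BijOn g (s i) (t i)) :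
    ∃ g : α → β, ∀ i, BijOn g (s i) (t i) := by
  classical
  choose g hg using h
  refine ⟨fun a => if ha : ∃ i, a ∈ s i then g ha.choose a else Classical.arbitrary β,
    fun i => (hg i).congr fun a ha => ?_⟩
  have hex : ∃ i, a ∈ s i := ⟨i, ha⟩
  have hi : hex.choose = i :=
    by_contra fun hne => disjoint_left.mp (hs hne) hex.choose_spec ha
  simp only [dif_pos hex, hi]

theorem bijOn_iUnion_of_pairwise_disjoint {ι α β : Type*} {s : ι → Set α} {t : ι → Set β}
    {f : α → β} (H : ∀ i, BijOn f (s i) (t i)) (ht : Pairwise fun i j => Disjoint (t i) (t j)) :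
    BijOn f (⋃ i, s i) (⋃ i, t i) := by
  refine bijOn_iUnion H fun a ha b hb hab => ?_
  obtain ⟨i, hai⟩ := mem_iUnion.mp ha
  obtain ⟨j, hbj⟩ := mem_iUnion.mp hb
  obtain rfl | hij := eq_or_ne i j
  · exact (H i).injOn hai hbj hab
  · exact (disjoint_left.mp (ht hij) ((H i).mapsTo hai) (hab ▸ (H j).mapsTo hbj)).elim

def blocksAt (G : SimpleGraph V) (x : V) : Set (Set V) :=
  {B | IsBlock G B ∧ x ∈ B}

structure CompleteBlocks (G : SimpleGraph V) : Prop where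
  nontrivial : ∀ ⦃B⦄, IsBlock G B → B.Nontrivial
  adj : ∀ ⦃B⦄, IsBlock G B → ∀ ⦃u⦄, u ∈ B → ∀ ⦃v⦄, v ∈ B → u ≠ v → G.Adj u v

structure BlockRegular (G : SimpleGraph V) : Prop extends CompleteBlocks G where
  card_eq : ∀ ⦃B C⦄, IsBlock G B → IsBlock G C → #B = #C
  card_blocksAt_eq : ∀ x y, #(blocksAt G x) = #(blocksAt G y)
  nontrivial_blocksAt : ∀ x, (blocksAt G x).Nontrivial

theorem CompleteBlocks.inter_subset (hG : CompleteBlocks G) {B C T : Set V} (hB : IsBlock G B)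
    (hC : IsBlock G C) (hBC : B ≠ C) (hT : (G.induce T).Connected) (hBT : (B ∩ T).Nonempty)
    (hCT : (C ∩ T).Nonempty) : B ∩ C ⊆ T := by
  rintro p ⟨hpB, hpC⟩
  by_contra hpT
  obtain ⟨x, hxB, hxT⟩ := hBT
  obtain ⟨w, hwC, hwT⟩ := hCT
  have hpw : p ≠ w := fun h => hpT (h ▸ hwT)
  have hwB := hB.mem_of_adj hT hxB hxT hpB hpT hwT (hG.adj hC hpC hwC hpw)
  exact hBC (hB.eq_of_mem_of_mem hC hpB hpC hwB hwC hpw)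

def BlockClosed (G : SimpleGraph V) (T : Set V) : Prop :=
  ∀ ⦃B⦄, IsBlock G B → ∀ ⦃p q⦄, p ∈ B → q ∈ B → p ≠ q → p ∈ T → q ∈ T → B ⊆ T

def attachedBlocks (G : SimpleGraph V) (T : Set V) : Set (Set V) :=
  {B | IsBlock G B ∧ (B ∩ T).Nonempty ∧ ¬B ⊆ T}

def blockExpand (G : SimpleGraph V) (T : Set V) : Set V :=
  T ∪ ⋃₀ attachedBlocks G T

section blockExpand

variable {T : Set V}

theorem self_subset_blockExpand : T ⊆ blockExpand G T :=
  subset_union_left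

theorem subset_blockExpand_of_mem_attachedBlocks {B : Set V} (hB : B ∈ attachedBlocks G T) :
    B ⊆ blockExpand G T :=
  fun _ hz => Or.inr (mem_sUnion_of_mem hz hB)

theorem IsBlock.subset_blockExpand {B : Set V} (hB : IsBlock G B) {x : V} (hxB : x ∈ B)
    (hxT : x ∈ T) : B ⊆ blockExpand G T := by
  by_cases hBT : B ⊆ T
  · exact hBT.trans self_subset_blockExpand
  · exact subset_blockExpand_of_mem_attachedBlocks ⟨hB, ⟨x, hxB, hxT⟩, hBT⟩

theorem blocksAt_subset_powerset_blockExpand {x : V} (hx : x ∈ T) :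
    blocksAt G x ⊆ 𝒫 blockExpand G T :=
  fun _ hB => hB.1.subset_blockExpand hB.2 hx

theorem exists_mem_attachedBlocks {z : V} (hz : z ∈ blockExpand G T) (hzT : z ∉ T) :
    ∃ D ∈ attachedBlocks G T, z ∈ D :=
  mem_sUnion.mp (hz.resolve_left hzT)

theorem BlockClosed.inter_eq_singleton (hTb : BlockClosed G T) {B : Set V}
    (hB : B ∈ attachedBlocks G T) {x : V} (hxB : x ∈ B) (hxT : x ∈ T) : B ∩ T = {x} :=
  eq_singleton_iff_unique_mem.mpr
    ⟨⟨hxB, hxT⟩, fun _ hy => by_contra fun hyx => hB.2.2 (hTb hB.1 hy.1 hxB hyx hy.2 hxT)⟩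

theorem connected_blockExpand (hTc : (G.induce T).Connected) :
    (G.induce (blockExpand G T)).Connected := by
  obtain ⟨⟨u, hu⟩⟩ := hTc.nonempty
  refine induce_connected_of_patches u (self_subset_blockExpand hu) ?_
  rintro w (hwT | hw)
  · exact ⟨T, self_subset_blockExpand, hu, hwT, hTc.preconnected _ _⟩
  obtain ⟨B, hB, hwB⟩ := mem_sUnion.mp hw
  obtain ⟨x, hxB, hxT⟩ := hB.2.1
  exact ⟨T ∪ B, union_subset self_subset_blockExpand (subset_blockExpand_of_mem_attachedBlocks hB),
    Or.inl hu, Or.inr hwB, (induce_union_connected hTc.preconnected hB.1.1.1.preconnected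
      ⟨x, hxT, hxB⟩).preconnected _ _⟩

namespace CompleteBlocks

variable (hG : CompleteBlocks G) (hTc : (G.induce T).Connected)
include hG hTc

theorem eq_of_mem_attachedBlocks {B D : Set V} (hB : IsBlock G B) (hD : D ∈ attachedBlocks G T)
    {p q : V} (hpB : p ∈ B) (hpD : p ∈ D) (hpT : p ∉ T) (hqB : q ∈ B)
    (hq : q ∈ blockExpand G T) (hpq : p ≠ q) : B = D := by
  by_cases hqD : q ∈ D
  · exact hB.eq_of_mem_of_mem hD.1 hpB hpD hqB hqD hpq
  exfalso
  obtain ⟨x, hxD, hxT⟩ := hD.2.1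
  by_cases hqT : q ∈ T
  · have hBD : B ≠ D := fun h => hqD (h ▸ hqB)
    exact hpT (hG.inter_subset hB hD.1 hBD hTc ⟨q, hqB, hqT⟩ ⟨x, hxD, hxT⟩ ⟨hpB, hpD⟩)
  -- `q` lies in a second attached block `D'`; leaving `D` along `pq` and returning to `T`
  -- through the attachment vertex of `D'` is impossible
  obtain ⟨D', hD', hqD'⟩ := exists_mem_attachedBlocks hq hqT
  obtain ⟨x', hxD', hxT'⟩ := hD'.2.1
  have hqx' : q ≠ x' := fun h => hqT (h ▸ hxT')
  have hT' : (G.induce (T ∪ {q, x'})).Connected :=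
    induce_union_connected hTc.preconnected
      (induce_pair_connected_of_adj (hG.adj hD'.1 hqD' hxD' hqx')).preconnected ⟨x', hxT', by simp⟩
  have hpT' : p ∉ T ∪ {q, x'} := by
    rintro (h | rfl | rfl)
    exacts [hpT h, hpq rfl, hpT hxT']
  exact hqD (hD.1.mem_of_adj hT' hxD (Or.inl hxT) hpD hpT' (Or.inr (by simp))
    (hG.adj hB hpB hqB hpq))

theorem blockClosed_blockExpand : BlockClosed G (blockExpand G T) := by
  intro B hB p q hpB hqB hpq hp hq
  by_cases hpT : p ∈ T
  · exact hB.subset_blockExpand hpB hpT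
  obtain ⟨D, hD, hpD⟩ := exists_mem_attachedBlocks hp hpT
  rw [hG.eq_of_mem_attachedBlocks hTc hB hD hpB hpD hpT hqB hq hpq]
  exact subset_blockExpand_of_mem_attachedBlocks hD

theorem mem_attachedBlocks_of_subset {B : Set V} (hB : IsBlock G B) (hBT : B ⊆ blockExpand G T)
    (hBT' : ¬B ⊆ T) : B ∈ attachedBlocks G T := by
  obtain ⟨z, hzB, hzT⟩ := not_subset.mp hBT'
  obtain ⟨D, hD, hzD⟩ := exists_mem_attachedBlocks (hBT hzB) hzT
  obtain ⟨q, hqB, hqz⟩ := (hG.nontrivial hB).exists_ne z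
  rwa [hG.eq_of_mem_attachedBlocks hTc hB hD hzB hzD hzT hqB (hBT hqB) hqz.symm]

theorem subsingleton_blocksAt_inter {x : V} (hx : x ∈ blockExpand G T) (hxT : x ∉ T) :
    (blocksAt G x ∩ 𝒫 blockExpand G T).Subsingleton := by
  obtain ⟨D, hD, hxD⟩ := exists_mem_attachedBlocks hx hxT
  have hBD : ∀ B ∈ blocksAt G x ∩ 𝒫 blockExpand G T, B = D := by
    rintro B ⟨⟨hB, hxB⟩, hBs⟩
    obtain ⟨q, hqB, hqx⟩ := (hG.nontrivial hB).exists_ne x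
    exact hG.eq_of_mem_attachedBlocks hTc hB hD hxB hxD hxT hqB (hBs hqB) hqx.symm
  exact fun B hB C hC => (hBD B hB).trans (hBD C hC).symm

end CompleteBlocks

theorem BlockRegular.not_blocksAt_subset_powerset (hG : BlockRegular G)
    (hTc : (G.induce T).Connected) {x : V} (hx : x ∈ blockExpand G T) (hxT : x ∉ T) :
    ¬blocksAt G x ⊆ 𝒫 blockExpand G T := fun h =>
  (hG.nontrivial_blocksAt x).not_subsingleton
    ((hG.subsingleton_blocksAt_inter hTc hx hxT).anti fun _ hB => ⟨hB, h hB⟩)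

end blockExpand

/-- The shape of the balls `(blockExpand G)^[n] {v}`. -/
structure IsBlockBall (G : SimpleGraph V) (T : Set V) : Prop where
  connected : (G.induce T).Connected
  blockClosed : BlockClosed G T
  subset_or_subsingleton : ∀ x ∈ T, blocksAt G x ⊆ 𝒫 T ∨ (blocksAt G x ∩ 𝒫 T).Subsingleton

theorem IsBlockBall.singleton (hG : CompleteBlocks G) (v : V) : IsBlockBall G {v} where
  connected := induce_singleton_connected v
  blockClosed _ _ _ _ _ _ hpq hp hq := (hpq (hp.trans hq.symm)).elim
  subset_or_subsingleton _ _ := Or.inr fun _ hB =>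
    ((hG.nontrivial hB.1.1).not_subset_singleton hB.2).elim

theorem CompleteBlocks.isBlockBall_blockExpand (hG : CompleteBlocks G) {T : Set V}
    (hTc : (G.induce T).Connected) : IsBlockBall G (blockExpand G T) where
  connected := connected_blockExpand hTc
  blockClosed := hG.blockClosed_blockExpand hTc
  subset_or_subsingleton x hx := by
    by_cases hxT : x ∈ T
    · exact Or.inl (blocksAt_subset_powerset_blockExpand hxT)
    · exact Or.inr (hG.subsingleton_blocksAt_inter hTc hx hxT)

theorem BlockClosed.disjoint_blocksAt_sdiff {T : Set V} (hT : BlockClosed G T) {x y : V}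
    (hx : x ∈ T) (hy : y ∈ T) (hxy : x ≠ y) :
    Disjoint (blocksAt G x \ 𝒫 T) (blocksAt G y \ 𝒫 T) :=
  disjoint_left.mpr fun _ ⟨⟨hB, hxB⟩, hBT⟩ ⟨⟨_, hyB⟩, _⟩ => hBT (hT hB hxB hyB hxy hx hy)

theorem attachedBlocks_eq_biUnion (T : Set V) :
    attachedBlocks G T = ⋃ x ∈ T, blocksAt G x \ 𝒫 T := by
  ext B
  simp only [attachedBlocks, blocksAt, mem_iUnion, mem_sdiff, mem_ofPred_eq, mem_powerset_iff]
  constructor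
  · rintro ⟨hB, ⟨x, hxB, hxT⟩, hBT⟩
    exact ⟨x, hxT, ⟨hB, hxB⟩, hBT⟩
  · rintro ⟨x, hxT, ⟨hB, hxB⟩, hBT⟩
    exact ⟨hB, ⟨x, hxB, hxT⟩, hBT⟩

theorem blockExpand_eq_union_iUnion (T : Set V) :
    blockExpand G T = T ∪ ⋃ B : attachedBlocks G T, (B : Set V) \ T := by
  rw [blockExpand, ← union_sdiff_self, sUnion_eq_iUnion, iUnion_sdiff]

theorem CompleteBlocks.pairwise_disjoint_sdiff (hG : CompleteBlocks G) {T : Set V}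
    (hTc : (G.induce T).Connected) :
    Pairwise fun B C : attachedBlocks G T => Disjoint ((B : Set V) \ T) ((C : Set V) \ T) :=
  fun B C hBC => disjoint_left.mpr fun _ hzB hzC => hzB.2 <|
    hG.inter_subset B.2.1 C.2.1 (Subtype.coe_ne_coe.mpr hBC) hTc B.2.2.1 C.2.2.1 ⟨hzB.1, hzC.1⟩

/-- Together with the `IsBlockBall` conditions, the last field makes the numbers of blocks
leaving `S` at `x` and leaving `f '' S` at `f x` agree. -/
structure IsBlockIso (G : SimpleGraph V) (S : Set V) (f : V → V) : Prop where
  isBlockBall : IsBlockBall G S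
  isBlockBall_image : IsBlockBall G (f '' S)
  injOn : InjOn f S
  isBlock_image : ∀ ⦃B⦄, IsBlock G B → B ⊆ S → IsBlock G (f '' B)
  exists_image_eq : ∀ ⦃B'⦄, IsBlock G B' → B' ⊆ f '' S → ∃ B, IsBlock G B ∧ B ⊆ S ∧ f '' B = B'
  blocksAt_subset_iff : ∀ ⦃x⦄, x ∈ S → (blocksAt G x ⊆ 𝒫 S ↔ blocksAt G (f x) ⊆ 𝒫 (f '' S))

namespace IsBlockIso

variable {S : Set V} {f : V → V}

theorem singleton (hG : BlockRegular G) (u v : V) : IsBlockIso G {u} (fun _ => v) where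
  isBlockBall := .singleton hG.toCompleteBlocks u
  isBlockBall_image := by
    rw [image_singleton]
    exact .singleton hG.toCompleteBlocks v
  injOn := subsingleton_singleton.injOn _
  isBlock_image _ hB hBu := ((hG.nontrivial hB).not_subset_singleton hBu).elim
  exists_image_eq _ hB' hB'v := by
    rw [image_singleton] at hB'v
    exact ((hG.nontrivial hB').not_subset_singleton hB'v).elim
  blocksAt_subset_iff x hx := by
    rw [mem_singleton_iff.mp hx, image_singleton]
    have hsingle : ∀ w : V, ¬blocksAt G w ⊆ 𝒫 {w} := fun w h =>
      have ⟨B, hB⟩ := (hG.nontrivial_blocksAt w).nonempty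
      (hG.nontrivial hB.1).not_subset_singleton (h hB)
    exact iff_of_false (hsingle u) (hsingle v)

theorem adj_iff (hG : CompleteBlocks G) (hf : IsBlockIso G S f) {a b : V} (ha : a ∈ S)
    (hb : b ∈ S) (ha' : blocksAt G a ⊆ 𝒫 S) (hfa' : blocksAt G (f a) ⊆ 𝒫 (f '' S)) :
    G.Adj (f a) (f b) ↔ G.Adj a b := by
  constructor
  · intro hab
    obtain ⟨B', hB', haB', hbB'⟩ := exists_isBlock_of_adj hab
    obtain ⟨B, hB, hBS, rfl⟩ := hf.exists_image_eq hB' (hfa' ⟨hB', haB'⟩)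
    exact hG.adj hB (hf.injOn.mem_of_mem_image hBS ha haB')
      (hf.injOn.mem_of_mem_image hBS hb hbB') fun h => hab.ne (h ▸ rfl)
  · intro hab
    obtain ⟨B, hB, haB, hbB⟩ := exists_isBlock_of_adj hab
    exact hG.adj (hf.isBlock_image hB (ha' ⟨hB, haB⟩)) (mem_image_of_mem f haB)
      (mem_image_of_mem f hbB) fun h => hab.ne (hf.injOn ha hb h)

theorem mk_blocksAt_sdiff_eq (hG : BlockRegular G) (hf : IsBlockIso G S f) {x : V} (hx : x ∈ S) :
    #↥(blocksAt G x \ 𝒫 S) = #↥(blocksAt G (f x) \ 𝒫 (f '' S)) := by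
  by_cases hin : blocksAt G x ⊆ 𝒫 S
  · rw [sdiff_eq_empty.mpr hin, sdiff_eq_empty.mpr ((hf.blocksAt_subset_iff hx).mp hin),
      mk_eq_zero]
  -- both sides are `λ` minus the same number, `0` or `1`
  have hsub := (hf.isBlockBall.subset_or_subsingleton x hx).resolve_left hin
  have hsub' := (hf.isBlockBall_image.subset_or_subsingleton (f x)
    (mem_image_of_mem f hx)).resolve_left (mt (hf.blocksAt_subset_iff hx).mpr hin)
  refine mk_sdiff_eq_mk_sdiff (hG.card_blocksAt_eq x (f x)) hsub hsub' ⟨?_, ?_⟩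
  · rintro ⟨B, ⟨hB, hxB⟩, hBS⟩
    exact ⟨f '' B, ⟨hf.isBlock_image hB hBS, mem_image_of_mem f hxB⟩, image_mono hBS⟩
  · rintro ⟨B', ⟨hB', hxB'⟩, hB'S⟩
    obtain ⟨B, hB, hBS, rfl⟩ := hf.exists_image_eq hB' hB'S
    exact ⟨B, ⟨hB, hf.injOn.mem_of_mem_image hBS hx hxB'⟩, hBS⟩

theorem exists_bijOn_attachedBlocks (hG : BlockRegular G) (hf : IsBlockIso G S f) :
    ∃ σ : Set V → Set V, BijOn σ (attachedBlocks G S) (attachedBlocks G (f '' S)) ∧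
      ∀ B ∈ attachedBlocks G S, ∀ x ∈ B, x ∈ S → f x ∈ σ B := by
  obtain ⟨σ, hσ⟩ := exists_forall_bijOn
    (fun x y hxy => hf.isBlockBall.blockClosed.disjoint_blocksAt_sdiff x.2 y.2
      (Subtype.coe_ne_coe.mpr hxy))
    fun x : S => exists_bijOn_of_mk_eq (hf.mk_blocksAt_sdiff_eq hG x.2)
  have hbij := bijOn_iUnion_of_pairwise_disjoint hσ fun x y hxy =>
    hf.isBlockBall_image.blockClosed.disjoint_blocksAt_sdiff (mem_image_of_mem f x.2)
      (mem_image_of_mem f y.2) fun h => hxy (Subtype.ext (hf.injOn x.2 y.2 h))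
  have himage : ⋃ x ∈ S, blocksAt G (f x) \ 𝒫 (f '' S) = attachedBlocks G (f '' S) := by
    rw [attachedBlocks_eq_biUnion, biUnion_image]
  rw [← biUnion_eq_iUnion S fun x _ => blocksAt G x \ 𝒫 S,
    ← biUnion_eq_iUnion S fun x _ => blocksAt G (f x) \ 𝒫 (f '' S), himage,
    ← attachedBlocks_eq_biUnion] at hbij
  refine ⟨σ, hbij, fun B hB x hxB hxS => ?_⟩
  exact ((hσ ⟨x, hxS⟩).mapsTo ⟨⟨hB.1, hxB⟩, hB.2.2⟩).1.2

theorem exists_bijOn_sdiff (hG : BlockRegular G) (hf : IsBlockIso G S f) {σ : Set V → Set V}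
    (hσ : BijOn σ (attachedBlocks G S) (attachedBlocks G (f '' S)))
    (hσf : ∀ B ∈ attachedBlocks G S, ∀ x ∈ B, x ∈ S → f x ∈ σ B) :
    ∃ g : V → V, ∀ B ∈ attachedBlocks G S, BijOn g (B \ S) (σ B \ f '' S) := by
  obtain ⟨⟨u, -⟩⟩ := hf.isBlockBall.connected.nonempty
  have : Nonempty V := ⟨u⟩
  have hpiece : ∀ B : attachedBlocks G S, ∃ g : V → V, BijOn g (B \ S) (σ B \ f '' S) := by
    rintro ⟨B, hB⟩
    obtain ⟨x, hxB, hxS⟩ := hB.2.1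
    have hσB := hσ.mapsTo hB
    have hfx := hσf B hB x hxB hxS
    have h₁ : B \ S = B \ {x} := by
      rw [← sdiff_self_inter, hf.isBlockBall.blockClosed.inter_eq_singleton hB hxB hxS]
    have h₂ : σ B \ f '' S = σ B \ {f x} := by
      rw [← sdiff_self_inter,
        hf.isBlockBall_image.blockClosed.inter_eq_singleton hσB hfx (mem_image_of_mem f hxS)]
    rw [h₁, h₂]
    exact exists_bijOn_sdiff_singleton (hG.card_eq hB.1 hσB.1) hxB hfx
  obtain ⟨g, hg⟩ := exists_forall_bijOn
    (hG.pairwise_disjoint_sdiff hf.isBlockBall.connected) hpiece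
  exact ⟨g, fun B hB => hg ⟨B, hB⟩⟩

theorem exists_bijOn_blockExpand (hG : BlockRegular G) (hf : IsBlockIso G S f) :
    ∃ g : V → V, BijOn g (blockExpand G S) (blockExpand G (f '' S)) ∧ EqOn g f S ∧
      BijOn (image g) (attachedBlocks G S) (attachedBlocks G (f '' S)) := by
  classical
  obtain ⟨σ, hσ, hσf⟩ := hf.exists_bijOn_attachedBlocks hG
  obtain ⟨g₀, hg₀⟩ := hf.exists_bijOn_sdiff hG hσ hσf
  set g := S.piecewise f g₀
  have hgS : EqOn g f S := piecewise_eqOn S f g₀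
  have hpiece : ∀ B ∈ attachedBlocks G S, BijOn g (B \ S) (σ B \ f '' S) := fun B hB =>
    (hg₀ B hB).congr fun _ hz => (piecewise_eqOn_compl S f g₀ hz.2).symm
  have himage : ∀ B ∈ attachedBlocks G S, g '' B = σ B := by
    intro B hB
    obtain ⟨x, hxB, hxS⟩ := hB.2.1
    conv_lhs => rw [← inter_union_sdiff B S]
    rw [image_union, (hpiece B hB).image_eq,
      hf.isBlockBall.blockClosed.inter_eq_singleton hB hxB hxS, image_singleton, hgS hxS,
      ← hf.isBlockBall_image.blockClosed.inter_eq_singleton (hσ.mapsTo hB) (hσf B hB x hxB hxS)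
        (mem_image_of_mem f hxS), inter_union_sdiff]
  refine ⟨g, ?_, hgS, hσ.congr fun B hB => (himage B hB).symm⟩
  have hold : BijOn g S (f '' S) := hf.injOn.bijOn_image.congr hgS.symm
  have hnew : BijOn g (⋃ B : attachedBlocks G S, (B : Set V) \ S)
      (⋃ B : attachedBlocks G (f '' S), (B : Set V) \ f '' S) := by
    have h := bijOn_iUnion_of_pairwise_disjoint (fun B : attachedBlocks G S => hpiece B B.2)
      fun B C hBC => by
        have hne : (⟨σ B, hσ.mapsTo B.2⟩ : attachedBlocks G (f '' S)) ≠ ⟨σ C, hσ.mapsTo C.2⟩ :=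
          fun h => hBC (Subtype.ext (hσ.injOn B.2 C.2 (congrArg Subtype.val h)))
        exact hG.pairwise_disjoint_sdiff hf.isBlockBall_image.connected hne
    rwa [← biUnion_eq_iUnion _ fun B _ => σ B \ f '' S, hσ.iUnion_comp fun B => B \ f '' S,
      biUnion_eq_iUnion] at h
  have hdisj : Disjoint S (⋃ B : attachedBlocks G S, (B : Set V) \ S) :=
    disjoint_left.mpr fun _ hz hz' => (mem_iUnion.mp hz').choose_spec.2 hz
  rw [blockExpand_eq_union_iUnion, blockExpand_eq_union_iUnion]
  refine hold.union hnew ((injOn_union hdisj).mpr ⟨hold.injOn, hnew.injOn, fun a ha b hb hab => ?_⟩)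
  obtain ⟨B', hB'⟩ := mem_iUnion.mp (hnew.mapsTo hb)
  exact hB'.2 (hab ▸ hold.mapsTo ha)

theorem exists_extension (hG : BlockRegular G) (hf : IsBlockIso G S f) :
    ∃ g : V → V, IsBlockIso G (blockExpand G S) g ∧
      g '' blockExpand G S = blockExpand G (f '' S) ∧ EqOn g f S := by
  obtain ⟨g, hg, hgS, hgB⟩ := hf.exists_bijOn_blockExpand hG
  have hSc := hf.isBlockBall.connected
  have hSc' := hf.isBlockBall_image.connected
  refine ⟨g, ⟨hG.isBlockBall_blockExpand hSc, ?_, hg.injOn, ?_, ?_, ?_⟩, hg.image_eq, hgS⟩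
  · rw [hg.image_eq]
    exact hG.isBlockBall_blockExpand hSc'
  · intro B hB hBs
    by_cases hBS : B ⊆ S
    · rw [image_congr (hgS.mono hBS)]
      exact hf.isBlock_image hB hBS
    · exact (hgB.mapsTo (hG.mem_attachedBlocks_of_subset hSc hB hBs hBS)).1
  · intro B' hB' hB's
    rw [hg.image_eq] at hB's
    by_cases hB'S : B' ⊆ f '' S
    · obtain ⟨B, hB, hBS, rfl⟩ := hf.exists_image_eq hB' hB'S
      exact ⟨B, hB, hBS.trans self_subset_blockExpand, image_congr (hgS.mono hBS)⟩
    · obtain ⟨B, hB, rfl⟩ := hgB.surjOn (hG.mem_attachedBlocks_of_subset hSc' hB' hB's hB'S)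
      exact ⟨B, hB.1, subset_blockExpand_of_mem_attachedBlocks hB, rfl⟩
  · intro x hx
    rw [hg.image_eq]
    by_cases hxS : x ∈ S
    · rw [hgS hxS]
      exact iff_of_true (blocksAt_subset_powerset_blockExpand hxS)
        (blocksAt_subset_powerset_blockExpand (mem_image_of_mem f hxS))
    · have hgx : g x ∉ f '' S := by
        rintro ⟨y, hyS, hyx⟩
        exact hxS (hg.injOn (self_subset_blockExpand hyS) hx ((hgS hyS).trans hyx) ▸ hyS)
      exact iff_of_false (hG.not_blocksAt_subset_powerset hSc hx hxS)
        (hG.not_blocksAt_subset_powerset hSc' (hg.mapsTo hx) hgx)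

end IsBlockIso

theorem monotone_iterate_blockExpand (T : Set V) : Monotone fun n => (blockExpand G)^[n] T :=
  monotone_nat_of_le_succ fun n => by
    rw [Function.iterate_succ_apply']
    exact self_subset_blockExpand

theorem exists_mem_iterate_blockExpand (hconn : G.Connected) {T : Set V} {u : V} (hu : u ∈ T)
    (z : V) : ∃ n, z ∈ (blockExpand G)^[n] T := by
  obtain ⟨p⟩ := hconn.preconnected u z
  suffices ∀ {a b : V} (p : G.Walk a b) (n : ℕ), a ∈ (blockExpand G)^[n] T →
      ∃ m, b ∈ (blockExpand G)^[m] T from this p 0 hu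
  intro a b p
  induction p with
  | nil => exact fun n ha => ⟨n, ha⟩
  | cons hab p ih =>
    intro n ha
    obtain ⟨B, hB, haB, hbB⟩ := exists_isBlock_of_adj hab
    refine ih (n + 1) ?_
    rw [Function.iterate_succ_apply']
    exact hB.subset_blockExpand haB ha hbB

theorem exists_eqOn_of_eqOn_succ {α β : Type*} {S : ℕ → Set α} (hS : Monotone S)
    (hcov : ∀ a, ∃ n, a ∈ S n) {F : ℕ → α → β} (hF : ∀ n, EqOn (F (n + 1)) (F n) (S n)) :
    ∃ Φ : α → β, ∀ n, EqOn Φ (F n) (S n) := by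
  classical
  have hle : ∀ {m n}, m ≤ n → EqOn (F n) (F m) (S m) := by
    intro m n hmn
    induction n, hmn using Nat.le_induction with
    | base => exact eqOn_refl _ _
    | succ n hmn ih => exact fun a ha => (hF n (hS hmn ha)).trans (ih ha)
  exact ⟨fun a => F (Nat.find (hcov a)) a, fun n a ha =>
    (hle (Nat.find_min' (hcov a) ha) (Nat.find_spec (hcov a))).symm⟩

theorem CompleteBlocks.exists_iso_of_chain (hG : CompleteBlocks G) (hconn : G.Connected)
    {u v : V} {F : ℕ → V → V} (hF : ∀ n, IsBlockIso G ((blockExpand G)^[n] {u}) (F n))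
    (hFv : ∀ n, F n '' (blockExpand G)^[n] {u} = (blockExpand G)^[n] {v})
    (hFsucc : ∀ n, EqOn (F (n + 1)) (F n) ((blockExpand G)^[n] {u})) (hF0 : F 0 u = v) :
    ∃ α : G ≃g G, α u = v := by
  have hS := monotone_iterate_blockExpand (G := G) {u}
  have hcov := exists_mem_iterate_blockExpand hconn (mem_singleton u)
  obtain ⟨Φ, hΦ⟩ := exists_eqOn_of_eqOn_succ hS hcov hFsucc
  have hpair : ∀ a b, ∃ n, a ∈ (blockExpand G)^[n] {u} ∧ b ∈ (blockExpand G)^[n] {u} := by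
    intro a b
    obtain ⟨m, ha⟩ := hcov a
    obtain ⟨k, hb⟩ := hcov b
    exact ⟨max m k, hS (le_max_left m k) ha, hS (le_max_right m k) hb⟩
  have hinj : Function.Injective Φ := by
    intro a b hab
    obtain ⟨n, ha, hb⟩ := hpair a b
    exact (hF n).injOn ha hb (by rw [← hΦ n ha, ← hΦ n hb, hab])
  have hsurj : Function.Surjective Φ := by
    intro y
    obtain ⟨n, hy⟩ := exists_mem_iterate_blockExpand hconn (mem_singleton v) y
    rw [← hFv n] at hy
    obtain ⟨a, ha, rfl⟩ := hy
    exact ⟨a, hΦ n ha⟩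
  -- adjacency is checked one level up, where both ends have all their blocks
  have hadj : ∀ a b, G.Adj (Φ a) (Φ b) ↔ G.Adj a b := by
    intro a b
    obtain ⟨n, ha, hb⟩ := hpair a b
    have ha' := hS n.le_succ ha
    have hb' := hS n.le_succ hb
    rw [hΦ (n + 1) ha', hΦ (n + 1) hb']
    refine (hF (n + 1)).adj_iff hG ha' hb' ?_ ?_
    · rw [Function.iterate_succ_apply']
      exact blocksAt_subset_powerset_blockExpand ha
    · rw [hFv, hFsucc n ha, Function.iterate_succ_apply', ← hFv n]
      exact blocksAt_subset_powerset_blockExpand (mem_image_of_mem _ ha)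
  exact ⟨⟨Equiv.ofBijective Φ ⟨hinj, hsurj⟩, fun {a b} => hadj a b⟩, (hΦ 0 rfl).trans hF0⟩

theorem BlockRegular.exists_iso (hG : BlockRegular G) (hconn : G.Connected) (u v : V) :
    ∃ α : G ≃g G, α u = v := by
  choose! extend hextend using fun (S : Set V) (f : V → V) (hf : IsBlockIso G S f) =>
    hf.exists_extension hG
  let F : ℕ → V → V := fun n =>
    Nat.rec (fun _ => v) (fun k fk => extend ((blockExpand G)^[k] {u}) fk) n
  have hF : ∀ n, IsBlockIso G ((blockExpand G)^[n] {u}) (F n) ∧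
      F n '' (blockExpand G)^[n] {u} = (blockExpand G)^[n] {v} := by
    intro n
    induction n with
    | zero => exact ⟨.singleton hG u v, image_singleton⟩
    | succ n ih =>
      obtain ⟨hiso, himage, -⟩ := hextend _ _ ih.1
      rw [Function.iterate_succ_apply', Function.iterate_succ_apply', ← ih.2]
      exact ⟨hiso, himage⟩
  exact hG.exists_iso_of_chain hconn (fun n => (hF n).1) (fun n => (hF n).2)
    (fun n => (hextend _ _ (hF n).1).2.2) rfl

end

theorem stmt_7_general {V : Type*} (G : SimpleGraph V) (κ lam : Cardinal)
    (hκ : 2 ≤ κ) (hlam : 2 ≤ lam)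
    (hconn : G.Connected)
    (hblockcard : ∀ B : Set V, IsBlock G B → #B = κ)
    (hblockcomplete : ∀ B : Set V, IsBlock G B →
      ∀ u ∈ B, ∀ v ∈ B, u ≠ v → G.Adj u v)
    (hvertex : ∀ v : V, #{B : Set V // IsBlock G B ∧ v ∈ B} = lam) :
    ∀ u v : V, ∃ α : G ≃g G, α u = v := by
  have hG : BlockRegular G :=
    { nontrivial := fun B hB => Set.nontrivial_coe_sort.mp <|
        one_lt_iff_nontrivial.mp (Cardinal.one_lt_two.trans_le (hblockcard B hB ▸ hκ))
      adj := fun B hB u hu v hv => hblockcomplete B hB u hu v hv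
      card_eq := fun B C hB hC => (hblockcard B hB).trans (hblockcard C hC).symm
      card_blocksAt_eq := fun x y => (hvertex x).trans (hvertex y).symm
      nontrivial_blocksAt := fun x => Set.nontrivial_coe_sort.mp <|
        one_lt_iff_nontrivial.mp (Cardinal.one_lt_two.trans_le (hvertex x ▸ hlam)) }
  exact hG.exists_iso hconn

/-- A connected graph with more than one end, all of whose blocks
are complete graphs on `κ` vertices and each of whose vertices lies in exactly
`λ` blocks (`κ, λ ≥ 2`), is vertex-transitive. -/
theorem stmt_7 {V : Type*} (G : SimpleGraph V) (κ lam : Cardinal)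
    (hκ : 2 ≤ κ) (hlam : 2 ≤ lam)
    (hconn : G.Connected) (hends : ∃ e₁ e₂ : G.end, e₁ ≠ e₂)
    (hblockcard : ∀ B : Set V, IsBlock G B → #B = κ)
    (hblockcomplete : ∀ B : Set V, IsBlock G B →
      ∀ u ∈ B, ∀ v ∈ B, u ≠ v → G.Adj u v)
    (hvertex : ∀ v : V, #{B : Set V // IsBlock G B ∧ v ∈ B} = lam) :
    ∀ u v : V, ∃ α : G ≃g G, α u = v :=
  stmt_7_general G κ lam hκ hlam hconn hblockcard hblockcomplete hvertex
end

section
/- In a connected graph G, for every k∈ℕ and every pair of distinct vertices u,v, there are only finitely many vertex sets S of size k such that S separates u and v properly, i.e., u and v lie in distinct components of G−S and each of those two components is adjacent to every vertex of S. -/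
/-- `u` and `v` lie in the same component of `G − S`: there is a walk from `u`
to `v` avoiding `S`. -/
def ConnAvoiding {V : Type*} (G : SimpleGraph V) (S : Set V) (u v : V) : Prop :=
  ∃ p : G.Walk u v, ∀ x ∈ p.support, x ∉ S

/-- `S` separates `u` and `v` properly: `u, v ∉ S`, they lie in distinct
components of `G − S`, and each of these two components is adjacent to every
vertex of `S`. -/
def SeparatesProperly {V : Type*} (G : SimpleGraph V) (S : Set V) (u v : V) : Prop :=
  u ∉ S ∧ v ∉ S ∧ ¬ ConnAvoiding G S u v ∧
  (∀ s ∈ S, ∃ w, w ∉ S ∧ G.Adj s w ∧ ConnAvoiding G S u w) ∧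
  (∀ s ∈ S, ∃ w, w ∉ S ∧ G.Adj s w ∧ ConnAvoiding G S v w)

/-!
A nonempty properly separating set `S` puts `u` and `v` into one component of `G`, since both
sides are adjacent to any vertex of `S`; so `S` meets a fixed `u`–`v` walk `p`. For `x ∈ S` on `p`,
`S \ {x}` still separates `u` and `v` properly once the edges at `x` are deleted. Hence, by
induction on `k`, the separating sets of size `k + 1` are among the finitely many `insert x T` with
`x` on `p` and `T` separating in `G.deleteIncidenceSet x`.
-/

section

open SimpleGraph

variable {V : Type*} {G : SimpleGraph V} {S : Set V} {u v w x : V}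

theorem SimpleGraph.Walk.notMem_support_of_deleteIncidenceSet (hu : u ≠ x)
    (p : (G.deleteIncidenceSet x).Walk u w) : x ∉ p.support := by
  induction p with
  | nil => simpa using hu.symm
  | cons h _ ih =>
    rw [Walk.support_cons, List.mem_cons, not_or]
    exact ⟨hu.symm, ih (deleteIncidenceSet_adj.1 h).2.2⟩

theorem connAvoiding_deleteIncidenceSet_iff (hx : x ∈ S) (hu : u ≠ x) :
    ConnAvoiding (G.deleteIncidenceSet x) (S \ {x}) u w ↔ ConnAvoiding G S u w := by
  constructor
  · rintro ⟨q, hq⟩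
    refine ⟨q.mapLe (G.deleteIncidenceSet_le x), fun y hy hyS => ?_⟩
    rw [Walk.support_mapLe_eq_support] at hy
    exact hq y hy ⟨hyS, fun hyx => q.notMem_support_of_deleteIncidenceSet hu (hyx ▸ hy)⟩
  · rintro ⟨p, hp⟩
    have hedges : ∀ e ∈ p.edges, e ∈ (G.deleteIncidenceSet x).edgeSet := by
      intro e he
      rw [edgeSet_deleteIncidenceSet]
      refine ⟨p.edges_subset_edgeSet he, fun hxe => hp x ?_ hx⟩
      exact p.fst_mem_support_of_mem_edges (Sym2.other_spec hxe.2 ▸ he)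
    exact ⟨p.transfer _ hedges, fun y hy hyS => hp y (by rwa [Walk.support_transfer] at hy) hyS.1⟩

theorem SeparatesProperly.deleteIncidenceSet (h : SeparatesProperly G S u v) (hx : x ∈ S) :
    SeparatesProperly (G.deleteIncidenceSet x) (S \ {x}) u v := by
  obtain ⟨hu, hv, hnc, hnu, hnv⟩ := h
  have hne : ∀ {a}, a ∉ S → a ≠ x := fun ha hax => ha (hax ▸ hx)
  have touches : ∀ a, a ∉ S → (∀ s ∈ S, ∃ w, w ∉ S ∧ G.Adj s w ∧ ConnAvoiding G S a w) →
      ∀ s ∈ S \ {x}, ∃ w, w ∉ S \ {x} ∧ (G.deleteIncidenceSet x).Adj s w ∧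
        ConnAvoiding (G.deleteIncidenceSet x) (S \ {x}) a w := by
    rintro a ha hna s ⟨hs, hsx⟩
    obtain ⟨w, hw, hsw, haw⟩ := hna s hs
    exact ⟨w, fun hw' => hw hw'.1, deleteIncidenceSet_adj.2 ⟨hsw, hsx, hne hw⟩,
      (connAvoiding_deleteIncidenceSet_iff hx (hne ha)).2 haw⟩
  refine ⟨fun hu' => hu hu'.1, fun hv' => hv hv'.1, ?_, touches u hu hnu, touches v hv hnv⟩
  rwa [connAvoiding_deleteIncidenceSet_iff hx (hne hu)]

theorem SeparatesProperly.reachable (h : SeparatesProperly G S u v) (hS : S.Nonempty) :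
    G.Reachable u v := by
  obtain ⟨s, hs⟩ := hS
  obtain ⟨w, -, hsw, ⟨p, -⟩⟩ := h.2.2.2.1 s hs
  obtain ⟨w', -, hsw', ⟨p', -⟩⟩ := h.2.2.2.2 s hs
  exact (p.reachable.trans hsw.symm.reachable).trans (p'.reachable.trans hsw'.symm.reachable).symm

theorem finite_setOf_separatesProperly (G : SimpleGraph V) (u v : V) (k : ℕ) :
    {S : Set V | S.Finite ∧ S.ncard = k ∧ SeparatesProperly G S u v}.Finite := by
  induction k generalizing G with
  | zero =>
    refine (Set.finite_singleton ∅).subset fun S ⟨hfin, hcard, _⟩ => ?_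
    exact (Set.ncard_eq_zero hfin).1 hcard
  | succ k ih =>
    by_cases hr : G.Reachable u v
    · obtain ⟨p⟩ := hr
      refine (p.support.finite_toSet.biUnion fun x _ => (ih (G.deleteIncidenceSet x)).image
        (insert x)).subset fun S ⟨hfin, hcard, hsep⟩ => ?_
      obtain ⟨x, hxp, hxS⟩ : ∃ x ∈ p.support, x ∈ S := by
        by_contra! h
        exact hsep.2.2.1 ⟨p, h⟩
      refine Set.mem_biUnion hxp ⟨S \ {x}, ⟨hfin.sdiff, ?_, hsep.deleteIncidenceSet hxS⟩, ?_⟩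
      · rw [Set.ncard_sdiff_singleton_of_mem hxS, hcard, Nat.add_sub_cancel]
      · rw [Set.insert_sdiff_singleton, Set.insert_eq_of_mem hxS]
    · refine Set.finite_empty.subset fun S ⟨_, hcard, hsep⟩ => hr (hsep.reachable ?_)
      exact Set.nonempty_of_ncard_ne_zero (by rw [hcard]; exact k.succ_ne_zero)

end

theorem stmt_11_general {V : Type*} (G : SimpleGraph V)
    (k : ℕ) (u v : V) :
    {S : Set V | S.Finite ∧ S.ncard = k ∧ SeparatesProperly G S u v}.Finite :=
  finite_setOf_separatesProperly G u v k

/-- In a connected graph, for every `k` and every pair of distinct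
vertices `u, v`, only finitely many vertex sets of size `k` separate `u` and `v`
properly. -/
theorem stmt_11 {V : Type*} (G : SimpleGraph V) (hconn : G.Connected)
    (k : ℕ) (u v : V) (huv : u ≠ v) :
    {S : Set V | S.Finite ∧ S.ncard = k ∧ SeparatesProperly G S u v}.Finite :=
  stmt_11_general G k u v
end

section
/- Let κ≥3 be a cardinal and let Y_κ be the connected graph with two kinds of blocks — single edges (K^2) and complete graphs K^κ — in which every vertex lies in exactly one block of each kind. If k is even with k≥4, then Y_κ is not k-CS-transitive: there exist two isomorphic connected induced subgraphs of order k (induced paths of length k−1) such that no isomorphism between them extends to an automorphism of Y_κ. -/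
open Cardinal

/-- A graph is `k`-CS-transitive if for every two connected isomorphic induced
subgraphs of order `k`, some isomorphism between them extends to an
automorphism of the graph. -/
def KCSTransitive {V : Type*} (G : SimpleGraph V) (k : ℕ) : Prop :=
  ∀ s t : Set V, s.Finite → t.Finite → s.ncard = k → t.ncard = k →
    (G.induce s).Connected → (G.induce t).Connected →
    Nonempty (G.induce s ≃g G.induce t) →
    ∃ (γ : G.induce s ≃g G.induce t) (α : G ≃g G),
      ∀ x : s, α (x : V) = (γ x : V)

section Aux

variable {V : Type*} {G : SimpleGraph V}

lemma reach_mono {S T : Set V} (h : S ⊆ T) {x y : V} (hx : x ∈ S) (hy : y ∈ S)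
    (hr : (G.induce S).Reachable ⟨x, hx⟩ ⟨y, hy⟩) :
    (G.induce T).Reachable ⟨x, h hx⟩ ⟨y, h hy⟩ :=
  hr.map (⟨fun v => ⟨v.1, h v.2⟩, fun hab => hab⟩ : G.induce S →g G.induce T)

lemma connected_of_fn {S : Set V} {n : ℕ} {f : ℕ → V}
    (hmem : ∀ i ≤ n, f i ∈ S)
    (hsurj : ∀ x ∈ S, ∃ i ≤ n, f i = x)
    (hadj : ∀ i < n, G.Adj (f i) (f (i+1))) :
    (G.induce S).Connected := by
  have key : ∀ i, i ≤ n → ∀ (hi : f i ∈ S),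
      (G.induce S).Reachable ⟨f 0, hmem 0 (Nat.zero_le n)⟩ ⟨f i, hi⟩ := by
    intro i
    induction i with
    | zero => intro _ _; exact SimpleGraph.Reachable.refl _
    | succ i ih =>
      intro h hi
      exact (ih (by omega) (hmem i (by omega))).trans
        (SimpleGraph.Adj.reachable
          (by exact hadj i (by omega) :
            (G.induce S).Adj ⟨f i, hmem i (by omega)⟩ ⟨f (i+1), hi⟩))
  rw [SimpleGraph.connected_iff]
  refine ⟨?_, ⟨⟨f 0, hmem 0 (Nat.zero_le n)⟩⟩⟩
  rintro ⟨x, hx⟩ ⟨y, hy⟩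
  obtain ⟨i, hi, rfl⟩ := hsurj x hx
  obtain ⟨j, hj, rfl⟩ := hsurj y hy
  exact (key i hi hx).symm.trans (key j hj hy)

lemma conn_union {A B : Set V} (hA : (G.induce A).Connected) (hB : (G.induce B).Connected)
    (hAB : (A ∩ B).Nonempty) : (G.induce (A ∪ B)).Connected := by
  obtain ⟨c, hcA, hcB⟩ := hAB
  rw [SimpleGraph.connected_iff]
  refine ⟨?_, ⟨⟨c, Or.inl hcA⟩⟩⟩
  have hreach : ∀ x (hx : x ∈ A ∪ B), (G.induce (A ∪ B)).Reachable ⟨x, hx⟩ ⟨c, Or.inl hcA⟩ := by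
    intro x hx
    rcases hx with hx | hx
    · exact reach_mono Set.subset_union_left hx hcA (hA.preconnected _ _)
    · exact reach_mono Set.subset_union_right hx hcB (hB.preconnected _ _)
  rintro ⟨x, hx⟩ ⟨y, hy⟩
  exact (hreach x hx).trans (hreach y hy).symm

lemma conn_sUnion_chain {c : Set (Set V)} (hc : IsChain (· ⊆ ·) c) (hne : c.Nonempty)
    (hall : ∀ A ∈ c, (G.induce A).Connected) : (G.induce (⋃₀ c)).Connected := by
  rw [SimpleGraph.connected_iff]
  constructor
  · rintro ⟨x, hx⟩ ⟨y, hy⟩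
    obtain ⟨A, hA, hxA⟩ := hx
    obtain ⟨B, hB, hyB⟩ := hy
    have hex : ∃ C ∈ c, x ∈ C ∧ y ∈ C := by
      rcases eq_or_ne A B with rfl | hAB
      · exact ⟨A, hA, hxA, hyB⟩
      · rcases hc hA hB hAB with h | h
        · exact ⟨B, hB, h hxA, hyB⟩
        · exact ⟨A, hA, hxA, h hyB⟩
    obtain ⟨C, hC, hxC, hyC⟩ := hex
    exact reach_mono (Set.subset_sUnion_of_mem hC) hxC hyC ((hall C hC).preconnected _ _)
  · obtain ⟨A, hA⟩ := hne
    obtain ⟨⟨x, hx⟩⟩ := (hall A hA).nonempty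
    exact ⟨⟨x, Set.mem_sUnion.mpr ⟨A, hA, hx⟩⟩⟩

lemma exists_block_superset {S : Set V} {a b : V} (ha : a ∈ S) (hb : b ∈ S) (hab : a ≠ b)
    (hS : NoCutvertexConn G S) : ∃ B, S ⊆ B ∧ IsBlock G B := by
  have hz := zorn_subset_nonempty {C : Set V | S ⊆ C ∧ NoCutvertexConn G C} ?_ S
    ⟨subset_rfl, hS⟩
  · obtain ⟨m, hSm, hm⟩ := hz
    refine ⟨m, hSm, hm.1.2, ?_⟩
    intro C hmC hC
    exact ((hm.2 (y := C) ⟨hSm.trans hmC, hC⟩ hmC).antisymm hmC).symm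
  · intro c hcsub hchain hcne
    refine ⟨⋃₀ c, ⟨?_, ?_, ?_⟩, fun s hs => Set.subset_sUnion_of_mem hs⟩
    · obtain ⟨A, hA⟩ := hcne
      exact (hcsub hA).1.trans (Set.subset_sUnion_of_mem hA)
    · exact conn_sUnion_chain hchain hcne (fun A hA => (hcsub hA).2.1)
    · intro v hv _
      have : (⋃₀ c) \ {v} = ⋃₀ ((fun C => C \ {v}) '' c) := by
        ext x
        simp only [Set.mem_diff, Set.mem_sUnion, Set.mem_image, Set.mem_singleton_iff]
        constructor
        · rintro ⟨⟨C, hC, hxC⟩, hxv⟩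
          exact ⟨C \ {v}, ⟨C, hC, rfl⟩, hxC, hxv⟩
        · rintro ⟨_, ⟨C, hC, rfl⟩, hxC, hxv⟩
          exact ⟨⟨C, hC, hxC⟩, hxv⟩
      rw [this]
      refine conn_sUnion_chain ?_ ?_ ?_
      · rintro _ ⟨A, hA, rfl⟩ _ ⟨B, hB, rfl⟩ hne
        have hAB : A ≠ B := fun h => hne (by rw [h])
        rcases hchain hA hB hAB with h | h
        · exact Or.inl (Set.diff_subset_diff_left h)
        · exact Or.inr (Set.diff_subset_diff_left h)
      · obtain ⟨A, hA⟩ := hcne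
        exact ⟨A \ {v}, ⟨A, hA, rfl⟩⟩
      · rintro _ ⟨C, hC, rfl⟩
        have hSC := (hcsub hC).1
        have hCncc := (hcsub hC).2
        by_cases hvC : v ∈ C
        · refine hCncc.2 v hvC ?_
          rcases eq_or_ne a v with rfl | hne
          · exact ⟨b, hSC hb, fun h => hab (h.symm)⟩
          · exact ⟨a, hSC ha, hne⟩
        · show (G.induce (C \ {v})).Connected
          rw [Set.diff_singleton_eq_self hvC]
          exact hCncc.1

lemma blocks_eq_of_two_shared {B₁ B₂ : Set V} (h₁ : IsBlock G B₁) (h₂ : IsBlock G B₂)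
    {u v : V} (hu₁ : u ∈ B₁) (hu₂ : u ∈ B₂) (hv₁ : v ∈ B₁) (hv₂ : v ∈ B₂) (huv : u ≠ v) :
    B₁ = B₂ := by
  have hncc : NoCutvertexConn G (B₁ ∪ B₂) := by
    refine ⟨conn_union h₁.1.1 h₂.1.1 ⟨u, hu₁, hu₂⟩, ?_⟩
    intro x hx _
    have key : ∀ (B : Set V), IsBlock G B → u ∈ B → v ∈ B →
        (G.induce (B \ {x})).Connected ∧ (B \ {x}).Nonempty := by
      intro B hB huB hvB
      have hne : (B \ {x}).Nonempty := by
        rcases eq_or_ne u x with rfl | hux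
        · exact ⟨v, hvB, fun h => huv h.symm⟩
        · exact ⟨u, huB, hux⟩
      by_cases hxB : x ∈ B
      · exact ⟨hB.1.2 x hxB hne, hne⟩
      · refine ⟨?_, hne⟩
        rw [Set.diff_singleton_eq_self hxB]
        exact hB.1.1
    obtain ⟨hc₁, hn₁⟩ := key B₁ h₁ hu₁ hv₁
    obtain ⟨hc₂, hn₂⟩ := key B₂ h₂ hu₂ hv₂
    have : (B₁ ∪ B₂) \ {x} = (B₁ \ {x}) ∪ (B₂ \ {x}) := Set.union_diff_distrib
    rw [this]
    refine conn_union hc₁ hc₂ ?_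
    rcases eq_or_ne u x with rfl | hux
    · exact ⟨v, ⟨hv₁, fun h => huv h.symm⟩, ⟨hv₂, fun h => huv h.symm⟩⟩
    · exact ⟨u, ⟨hu₁, hux⟩, ⟨hu₂, hux⟩⟩
  have e₁ : B₁ = B₁ ∪ B₂ := h₁.2 _ Set.subset_union_left hncc
  have e₂ : B₂ = B₁ ∪ B₂ := h₂.2 _ Set.subset_union_right hncc
  exact e₁.trans e₂.symm

lemma two_elem {B : Set V} (hB : #B = 2) {v : V} (hv : v ∈ B) :
    ∃ w ∈ B, w ≠ v ∧ ∀ z ∈ B, z ≠ v → z = w := by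
  obtain ⟨⟨w, hw⟩, hne, huniq⟩ := (Cardinal.mk_eq_two_iff' (⟨v, hv⟩ : B)).mp hB
  refine ⟨w, hw, fun h => hne (Subtype.ext h), ?_⟩
  intro z hz hzv
  have := huniq ⟨z, hz⟩ (fun h => hzv (congrArg Subtype.val h))
  exact congrArg Subtype.val this

lemma three_diff {B : Set V} (hB : (3:Cardinal) ≤ #B) (a b : V) :
    ∃ w ∈ B, w ≠ a ∧ w ≠ b := by
  by_contra h
  push_neg at h
  have hsub : B ⊆ {a, b} := by
    intro x hx
    rcases eq_or_ne x a with rfl | hxa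
    · exact Set.mem_insert _ _
    · exact Set.mem_insert_iff.mpr (Or.inr (h x hx hxa))
  have : #B ≤ #({a, b} : Set V) := Cardinal.mk_le_mk_of_subset hsub
  have h2 : #({a, b} : Set V) ≤ 2 := by
    calc #({a, b} : Set V) ≤ #({b} : Set V) + 1 := Cardinal.mk_insert_le
    _ = 2 := by rw [Cardinal.mk_singleton]; norm_num
  have := hB.trans (this.trans h2)
  norm_num at this

lemma ncc_cycle {n : ℕ} (hn : 2 ≤ n) {w : ℕ → V}
    (hinj : ∀ i ≤ n, ∀ j ≤ n, w i = w j → i = j)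
    (hadj : ∀ i < n, G.Adj (w i) (w (i+1)))
    (hchord : G.Adj (w n) (w 0)) :
    NoCutvertexConn G (w '' Set.Iic n) := by
  have hmod : ∀ x, x ≤ 2*n → x % (n+1) = if x ≤ n then x else x - (n+1) := by
    intro x hx
    split
    · exact Nat.mod_eq_of_lt (by omega)
    · rw [Nat.mod_eq_sub_mod (by omega), Nat.mod_eq_of_lt (by omega)]
  constructor
  · exact connected_of_fn (fun i hi => ⟨i, hi, rfl⟩)
      (fun x hx => by obtain ⟨i, hi, rfl⟩ := hx; exact ⟨i, hi, rfl⟩) hadj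
  · intro v hv _
    obtain ⟨m, hm, rfl⟩ := hv
    have hm' : m ≤ n := hm
    have hrne : ∀ j ≤ n - 1, (m+1+j) % (n+1) ≠ m := by
      intro j hj heq
      rw [hmod _ (by omega)] at heq
      split at heq <;> omega
    refine connected_of_fn (n := n - 1) (f := fun j => w ((m+1+j) % (n+1))) ?_ ?_ ?_
    · intro j hj
      refine ⟨⟨(m+1+j) % (n+1), Set.mem_Iic.mpr (by have := Nat.mod_lt (m+1+j) (show 0 < n+1 by omega); omega), rfl⟩, ?_⟩
      simp only [Set.mem_singleton_iff]
      intro heq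
      exact hrne j hj (hinj _ (by have := Nat.mod_lt (m+1+j) (show 0 < n+1 by omega); omega) _ hm' heq)
    · rintro x ⟨⟨r, hr, rfl⟩, hxm⟩
      simp only [Set.mem_singleton_iff] at hxm
      have hr' : r ≤ n := hr
      have hrm : r ≠ m := fun h => hxm (by rw [h])
      by_cases h : m < r
      · refine ⟨r - m - 1, by omega, ?_⟩

        show w ((m+1+(r-m-1)) % (n+1)) = w r
        rw [hmod _ (by omega), if_pos (by omega)]
        congr 1; omega
      · refine ⟨r + n - m, by omega, ?_⟩
        show w ((m+1+(r+n-m)) % (n+1)) = w r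
        rw [hmod _ (by omega), if_neg (by omega)]
        congr 1; omega
    · intro i hi
      show G.Adj (w ((m+1+i) % (n+1))) (w ((m+1+(i+1)) % (n+1)))
      have key : (m+1+(i+1)) % (n+1) = ((m+1+i) % (n+1) + 1) % (n+1) := by
        rw [show m+1+(i+1) = (m+1+i)+1 by ring, Nat.add_mod (m+1+i) 1,
          Nat.mod_eq_of_lt (show 1 < n+1 by omega)]
      rw [key]
      have hml := Nat.mod_lt (m+1+i) (show 0 < n+1 by omega)
      generalize hA : (m+1+i) % (n+1) = a
      rw [hA] at hml
      rcases eq_or_lt_of_le (Nat.lt_succ_iff.mp hml) with heq | hlt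
      · rw [heq]
        simp only [Nat.mod_self]
        exact hchord
      · rw [Nat.mod_eq_of_lt (by omega)]
        exact hadj _ hlt

lemma conn_image (α : G ≃g G) {S : Set V} (h : (G.induce S).Connected) :
    (G.induce (α '' S)).Connected := by
  refine SimpleGraph.Connected.map
    (⟨fun x => ⟨α x.1, ⟨x.1, x.2, rfl⟩⟩, fun {a b} hab => ?_⟩ : G.induce S →g G.induce (α '' S))
    ?_ h
  · exact α.map_rel_iff.mpr hab
  · rintro ⟨y, x, hx, rfl⟩
    exact ⟨⟨x, hx⟩, rfl⟩

lemma ncc_image (α : G ≃g G) {S : Set V} (h : NoCutvertexConn G S) :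
    NoCutvertexConn G (α '' S) := by
  refine ⟨conn_image α h.1, ?_⟩
  rintro _ ⟨u, hu, rfl⟩ hne
  have himg : (α '' S) \ {α u} = α '' (S \ {u}) := by
    rw [Set.image_diff (EquivLike.injective α), Set.image_singleton]
  rw [himg] at hne ⊢
  refine conn_image α (h.2 u hu ?_)
  obtain ⟨_, ⟨z, hz, rfl⟩⟩ := hne
  exact ⟨z, hz⟩

lemma image_symm_image (α : G ≃g G) (T : Set V) : α '' (α.symm '' T) = T := by
  rw [← Set.image_comp]
  have : (⇑α ∘ ⇑α.symm) = id := by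
    funext x
    exact α.apply_symm_apply x
  rw [this, Set.image_id]

lemma isblock_image (α : G ≃g G) {B : Set V} (h : IsBlock G B) : IsBlock G (α '' B) := by
  refine ⟨ncc_image α h.1, ?_⟩
  intro C hBC hC
  have h1 : B ⊆ α.symm '' C := by
    intro x hx
    exact ⟨α x, hBC ⟨x, hx, rfl⟩, α.symm_apply_apply x⟩
  have h2 : NoCutvertexConn G (α.symm '' C) := ncc_image α.symm hC
  have h3 : B = α.symm '' C := h.2 _ h1 h2
  rw [h3, image_symm_image]

lemma card_image (α : G ≃g G) (B : Set V) : #(α '' B) = #B :=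
  Cardinal.mk_image_eq (EquivLike.injective α)

lemma exists_alt_path (G : SimpleGraph V) (κ : Cardinal) (hκ : 3 ≤ κ)
    (hconn : G.Connected)
    (hblockcomplete : ∀ B : Set V, IsBlock G B →
      ∀ u ∈ B, ∀ v ∈ B, u ≠ v → G.Adj u v)
    (hv2 : ∀ v : V, ∃! B : Set V, IsBlock G B ∧ v ∈ B ∧ #B = 2)
    (hvκ : ∀ v : V, ∃! B : Set V, IsBlock G B ∧ v ∈ B ∧ #B = κ) :
    ∃ (p : ℕ → V) (Bl : ℕ → Set V),
      (∀ i j, p i = p j → i = j) ∧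
      (∀ i, IsBlock G (Bl i)) ∧
      (∀ i, p i ∈ Bl i) ∧
      (∀ i, p (i+1) ∈ Bl i) ∧
      (∀ i, #(Bl i) = if Even i then 2 else κ) ∧
      (∀ i j, G.Adj (p i) (p j) ↔ (j = i + 1 ∨ i = j + 1)) := by
  classical
  have h2κ : (2 : Cardinal) ≠ κ := by
    intro h
    rw [← h] at hκ
    norm_num at hκ
  obtain ⟨Blt, hBltblock, hBltmem, hBltcard, hBltuniq⟩ :
      ∃ f : ℕ → V → Set V,
        (∀ n v, IsBlock G (f n v)) ∧ (∀ n v, v ∈ f n v) ∧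
        (∀ n v, #(f n v) = if Even n then 2 else κ) ∧
        (∀ n v (B : Set V), IsBlock G B → v ∈ B → #B = (if Even n then 2 else κ) → B = f n v) := by
    refine ⟨fun n v => if Even n then (hv2 v).choose else (hvκ v).choose, ?_, ?_, ?_, ?_⟩
    · intro n v
      by_cases h : Even n <;> simp only [if_pos, if_neg, h, ite_true, ite_false]
      · exact (hv2 v).choose_spec.1.1
      · exact (hvκ v).choose_spec.1.1
    · intro n v
      by_cases h : Even n <;> simp only [if_pos, if_neg, h, ite_true, ite_false]
      · exact (hv2 v).choose_spec.1.2.1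
      · exact (hvκ v).choose_spec.1.2.1
    · intro n v
      by_cases h : Even n <;> simp only [if_pos, if_neg, h, ite_true, ite_false]
      · exact (hv2 v).choose_spec.1.2.2
      · exact (hvκ v).choose_spec.1.2.2
    · intro n v B h1 h2 h3
      by_cases h : Even n <;> simp only [if_pos, if_neg, h, ite_true, ite_false] at h3 ⊢
      · exact (hv2 v).choose_spec.2 B ⟨h1, h2, h3⟩
      · exact (hvκ v).choose_spec.2 B ⟨h1, h2, h3⟩
  obtain ⟨v0⟩ := hconn.nonempty
  obtain ⟨w0, hw0B, hw0ne, _⟩ := two_elem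
    (by rw [hBltcard 0 v0]; norm_num : #(Blt 0 v0) = 2) (hBltmem 0 v0)
  obtain ⟨p, hp0, hp1w, hpstep⟩ :
      ∃ p : ℕ → V, p 0 = v0 ∧ p 1 = w0 ∧ ∀ n, p (n+2) =
        (if h : ((Blt (n+1) (p (n+1))) \ {p n, p (n+1)}).Nonempty then h.choose
         else p (n+1)) := by
    refine ⟨fun n => (Nat.rec (motive := fun _ => V × V) ((v0, w0) : V × V)
      (fun m ih => (ih.2,
        if h : ((Blt (m+1) ih.2) \ {ih.1, ih.2}).Nonempty then h.choose else ih.2)) n).1,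
      rfl, rfl, ?_⟩
    intro n
    rfl
  have master : ∀ n, (∀ i ≤ n, ∀ j ≤ n, p i = p j → i = j) ∧
      (∀ i, i + 1 ≤ n → p (i+1) ∈ Blt i (p i) ∧ p (i+1) ≠ p i ∧ p (i+1) ≠ p (i-1)) ∧
      (∀ i ≤ n, ∀ j ≤ n, G.Adj (p i) (p j) ↔ (j = i + 1 ∨ i = j + 1)) := by
    intro n
    induction n with
    | zero =>
      refine ⟨fun i hi j hj _ => by omega, fun i hi => by omega, fun i hi j hj => ?_⟩
      have : i = 0 := by omega
      subst this
      have : j = 0 := by omega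
      subst this
      simp only [G.irrefl]
      constructor
      · intro h; exact h.elim
      · intro h; omega
    | succ n ih =>
      obtain ⟨ihinj, ihstep, ihadj⟩ := ih
      have hstep : p (n+1) ∈ Blt n (p n) ∧ p (n+1) ≠ p n ∧ p (n+1) ≠ p (n-1) := by
        cases n with
        | zero =>
          rw [hp1w, hp0]
          have hB0 : Blt 0 v0 = Blt 0 (p 0) := by rw [hp0]
          exact ⟨hB0 ▸ hw0B, hw0ne, hw0ne⟩
        | succ m =>
          have ihm := ihstep m le_rfl
          have hN : ((Blt (m+1) (p (m+1))) \ {p m, p (m+1)}).Nonempty := by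
            by_cases hev : Even (m+1)
            · have hcard : #(Blt (m+1) (p (m+1))) = 2 := by
                rw [hBltcard]; simp [hev]
              obtain ⟨w, hwB, hwne, _⟩ := two_elem hcard (hBltmem (m+1) (p (m+1)))
              refine ⟨w, hwB, ?_⟩
              simp only [Set.mem_insert_iff, Set.mem_singleton_iff, not_or]
              refine ⟨?_, hwne⟩
              intro hwm
              subst hwm
              have heqB : Blt m (p m) = Blt (m+1) (p (m+1)) :=
                blocks_eq_of_two_shared (hBltblock m (p m)) (hBltblock (m+1) (p (m+1)))
                  (hBltmem m (p m)) hwB ihm.1 (hBltmem (m+1) (p (m+1))) (fun h => ihm.2.1 h.symm)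
              have hodd : ¬ Even m := by
                intro h
                exact (Nat.even_add_one.mp hev) h
              have := hBltcard m (p m)
              rw [heqB, hcard, if_neg hodd] at this
              exact h2κ this
            · have hcard : #(Blt (m+1) (p (m+1))) = κ := by
                rw [hBltcard]; simp [hev]
              obtain ⟨w, hwB, hw1, hw2⟩ := three_diff (hcard ▸ hκ) (p m) (p (m+1))
              exact ⟨w, hwB, by simp only [Set.mem_insert_iff, Set.mem_singleton_iff, not_or]; exact ⟨hw1, hw2⟩⟩
          have hval : p (m+2) = hN.choose := by rw [hpstep m, dif_pos hN]
          have hspec := hN.choose_spec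
          rw [← hval] at hspec
          obtain ⟨hmem, hne⟩ := hspec
          simp only [Set.mem_insert_iff, Set.mem_singleton_iff, not_or] at hne
          exact ⟨hmem, hne.2, by simpa using hne.1⟩
      have stepAll : ∀ i, i + 1 ≤ n + 1 →
          p (i+1) ∈ Blt i (p i) ∧ p (i+1) ≠ p i ∧ p (i+1) ≠ p (i-1) := by
        intro i hi
        rcases Nat.lt_or_ge (i+1) (n+1) with h | h
        · exact ihstep i (by omega)
        · have : i = n := by omega
          subst this
          exact hstep
      have consec_adj : ∀ i, i + 1 ≤ n + 1 → G.Adj (p i) (p (i+1)) := by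
        intro i hi
        exact hblockcomplete _ (hBltblock i (p i)) _ (hBltmem i (p i)) _ (stepAll i hi).1
          (Ne.symm (stepAll i hi).2.1)
      have claim : ∀ j ≤ n, p (n+1) ≠ p j := by
        intro j hj heq
        rcases eq_or_ne j n with rfl | h1
        · exact (stepAll j le_rfl).2.1 heq
        rcases eq_or_ne j (n-1) with rfl | h2
        · exact (stepAll n le_rfl).2.2 heq
        have hadjn : G.Adj (p n) (p j) := by
          have := consec_adj n le_rfl
          rwa [heq] at this
        have := (ihadj n le_rfl j (by omega)).mp hadjn
        omega
      have inj' : ∀ i ≤ n+1, ∀ j ≤ n+1, p i = p j → i = j := by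
        intro i hi j hj heq
        rcases Nat.lt_or_ge i (n+1) with hi' | hi' <;> rcases Nat.lt_or_ge j (n+1) with hj' | hj'
        · exact ihinj i (by omega) j (by omega) heq
        · have : j = n+1 := by omega
          subst this
          exact absurd heq.symm (claim i (by omega))
        · have : i = n+1 := by omega
          subst this
          exact absurd heq (claim j (by omega))
        · omega
      have noadj : ∀ j, j + 1 ≤ n → ¬ G.Adj (p j) (p (n+1)) := by
        intro j hj hadj0
        have hcyc : NoCutvertexConn G ((fun i => p (j+i)) '' Set.Iic (n+1-j)) := by
          refine ncc_cycle (by omega) ?_ ?_ ?_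
          · intro i hi i' hi' heq
            have := inj' (j+i) (by omega) (j+i') (by omega) heq
            omega
          · intro i hilt
            exact consec_adj (j+i) (by omega)
          · show G.Adj (p (j + (n+1-j))) (p (j+0))
            rw [show j + (n+1-j) = n+1 by omega, show j + 0 = j from rfl]
            exact hadj0.symm
        obtain ⟨D, hSD, hD⟩ := exists_block_superset
          (S := (fun i => p (j+i)) '' Set.Iic (n+1-j)) (a := p (j+0)) (b := p (j+1))
          ⟨0, Set.mem_Iic.mpr (by omega), rfl⟩ ⟨1, Set.mem_Iic.mpr (by omega), rfl⟩
          (by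
            intro h
            have := inj' (j+0) (by omega) (j+1) (by omega) h
            omega) hcyc
        have hmemD : ∀ r, j ≤ r → r ≤ n+1 → p r ∈ D := by
          intro r h1 h2
          exact hSD ⟨r - j, Set.mem_Iic.mpr (by omega), by show p (j + (r-j)) = p r; congr 1; omega⟩
        have hn1 : 1 ≤ n := by omega
        have e1 : D = Blt n (p n) :=
          blocks_eq_of_two_shared hD (hBltblock n (p n))
            (hmemD n (by omega) (by omega)) (hBltmem n (p n))
            (hmemD (n+1) (by omega) le_rfl) (stepAll n le_rfl).1
            (Ne.symm (stepAll n le_rfl).2.1)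
        have hstepn1 := stepAll (n-1) (by omega)
        rw [show n - 1 + 1 = n by omega] at hstepn1
        have e2 : D = Blt (n-1) (p (n-1)) :=
          blocks_eq_of_two_shared hD (hBltblock (n-1) (p (n-1)))
            (hmemD (n-1) (by omega) (by omega)) (hBltmem (n-1) (p (n-1)))
            (hmemD n (by omega) (by omega)) hstepn1.1
            (by
              intro h
              have := inj' (n-1) (by omega) n (by omega) h
              omega)
        have ecard : (if Even n then (2:Cardinal) else κ) = (if Even (n-1) then (2:Cardinal) else κ) := by
          rw [← hBltcard n (p n), ← hBltcard (n-1) (p (n-1)), ← e1, ← e2]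
        rcases Nat.even_or_odd n with hev | hodd
        · have h1 : ¬ Even (n-1) := by
            intro h
            rcases hev with ⟨a, ha⟩
            rcases h with ⟨b, hb⟩
            omega
          rw [if_pos hev, if_neg h1] at ecard
          exact h2κ ecard
        · have h1 : Even (n-1) := by
            rcases hodd with ⟨a, ha⟩
            exact ⟨a, by omega⟩
          have h2 : ¬ Even n := Nat.not_even_iff_odd.mpr hodd
          rw [if_neg h2, if_pos h1] at ecard
          exact h2κ ecard.symm
      have adj' : ∀ i ≤ n+1, ∀ j ≤ n+1, G.Adj (p i) (p j) ↔ (j = i + 1 ∨ i = j + 1) := by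
        intro i hi j hj
        constructor
        · intro hadj0
          by_contra hcon
          push_neg at hcon
          rcases Nat.lt_or_ge i (n+1) with hi' | hi' <;> rcases Nat.lt_or_ge j (n+1) with hj' | hj'
          · have := (ihadj i (by omega) j (by omega)).mp hadj0
            omega
          · have hj1 : j = n + 1 := by omega
            subst hj1
            have : i + 1 ≤ n := by omega
            exact noadj i this hadj0
          · have hi1 : i = n + 1 := by omega
            subst hi1
            have : j + 1 ≤ n := by omega
            exact noadj j this hadj0.symm
          · have : i = n+1 := by omega
            subst this
            have : j = n+1 := by omega
            subst this
            exact G.irrefl hadj0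
        · intro h
          rcases h with rfl | rfl
          · exact consec_adj i (by omega)
          · exact (consec_adj j (by omega)).symm
      exact ⟨inj', stepAll, adj'⟩
  refine ⟨p, fun n => Blt n (p n), ?_, fun i => hBltblock i (p i), fun i => hBltmem i (p i),
    ?_, fun i => hBltcard i (p i), ?_⟩
  · intro i j h
    exact (master (max i j)).1 i (le_max_left i j) j (le_max_right i j) h
  · intro i
    exact ((master (i+1)).2.1 i le_rfl).1
  · intro i j
    exact (master (max i j)).2.2 i (le_max_left i j) j (le_max_right i j)

end Aux

/-- The graph `Y_κ` (κ ≥ 3): connected, every block is complete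
and is either a `K²` or a `K^κ`, and every vertex lies in exactly one block of
each kind.  For even `k ≥ 4`, `Y_κ` is not `k`-CS-transitive. -/
theorem stmt_13 {V : Type*} (G : SimpleGraph V) (κ : Cardinal) (hκ : 3 ≤ κ)
    (hconn : G.Connected)
    (hblockcomplete : ∀ B : Set V, IsBlock G B →
      ∀ u ∈ B, ∀ v ∈ B, u ≠ v → G.Adj u v)
    (hblockcard : ∀ B : Set V, IsBlock G B → #B = 2 ∨ #B = κ)
    (hv2 : ∀ v : V, ∃! B : Set V, IsBlock G B ∧ v ∈ B ∧ #B = 2)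
    (hvκ : ∀ v : V, ∃! B : Set V, IsBlock G B ∧ v ∈ B ∧ #B = κ)
    (k : ℕ) (hk : 4 ≤ k) (hkeven : Even k) :
    ¬ KCSTransitive G k := by
  classical
  intro hT
  have h2κ : (2 : Cardinal) ≠ κ := by
    intro h
    rw [← h] at hκ
    norm_num at hκ
  obtain ⟨p, Bl, hinj, hblk, hmem0, hmem1, hcard, hadj⟩ :=
    exists_alt_path G κ hκ hconn hblockcomplete hv2 hvκ
  -- index function
  set ix : V → ℕ := fun v => if h : ∃ i, p i = v then h.choose else 0 with hix_def
  have hix : ∀ i, ix (p i) = i := by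
    intro i
    have h : ∃ j, p j = p i := ⟨i, rfl⟩
    have : ix (p i) = h.choose := by rw [hix_def]; exact dif_pos h
    rw [this]
    exact hinj _ _ h.choose_spec
  set s : Set V := p '' Set.Iio k with hs_def
  set t : Set V := (fun i => p (i+1)) '' Set.Iio k with ht_def
  have hsmem : ∀ i < k, p i ∈ s := fun i hi => ⟨i, Set.mem_Iio.mpr hi, rfl⟩
  have htmem : ∀ i, 1 ≤ i → i ≤ k → p i ∈ t := fun i h1 h2 =>
    ⟨i - 1, Set.mem_Iio.mpr (by omega), by show p (i-1+1) = p i; congr 1; omega⟩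
  have hsix : ∀ x ∈ s, ix x < k ∧ p (ix x) = x := by
    rintro x ⟨i, hi, rfl⟩
    rw [hix i]
    exact ⟨Set.mem_Iio.mp hi, rfl⟩
  have htix : ∀ x ∈ t, 1 ≤ ix x ∧ ix x ≤ k ∧ p (ix x) = x := by
    rintro x ⟨i, hi, rfl⟩
    have hi' := Set.mem_Iio.mp hi
    rw [hix (i+1)]
    exact ⟨by omega, by omega, rfl⟩
  -- cardinalities
  have hIiofin : (Set.Iio k).Finite := Set.finite_Iio k
  have hsfin : s.Finite := hIiofin.image p
  have htfin : t.Finite := hIiofin.image _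
  have hIiocard : (Set.Iio k).ncard = k := by
    rw [← Finset.coe_range, Set.ncard_coe_finset, Finset.card_range]
  have hscard : s.ncard = k := by
    rw [hs_def, Set.ncard_image_of_injOn (fun a _ b _ h => hinj a b h), hIiocard]
  have htcard : t.ncard = k := by
    rw [ht_def, Set.ncard_image_of_injOn (fun a _ b _ h => by have := hinj _ _ h; omega), hIiocard]
  -- connectivity
  have hsconn : (G.induce s).Connected := by
    refine connected_of_fn (n := k - 1) (f := p) ?_ ?_ ?_
    · intro i hi; exact hsmem i (by omega)
    · rintro x ⟨i, hi, rfl⟩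
      exact ⟨i, by have := Set.mem_Iio.mp hi; omega, rfl⟩
    · intro i hi; exact (hadj i (i+1)).mpr (Or.inl rfl)
  have htconn : (G.induce t).Connected := by
    refine connected_of_fn (n := k - 1) (f := fun i => p (i+1)) ?_ ?_ ?_
    · intro i hi; exact ⟨i, Set.mem_Iio.mpr (by omega), rfl⟩
    · rintro x ⟨i, hi, rfl⟩
      exact ⟨i, by have := Set.mem_Iio.mp hi; omega, rfl⟩
    · intro i hi; exact (hadj (i+1) (i+2)).mpr (Or.inl rfl)
  -- the shift isomorphism
  have hiso : Nonempty (G.induce s ≃g G.induce t) := by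
    refine ⟨⟨⟨fun x => ⟨p (ix x.1 + 1), htmem _ (by omega) (by have := (hsix x.1 x.2).1; omega)⟩,
      fun y => ⟨p (ix y.1 - 1), hsmem _ (by have := (htix y.1 y.2); omega)⟩, ?_, ?_⟩, ?_⟩⟩
    · rintro ⟨x, hx⟩
      obtain ⟨hlt, hpx⟩ := hsix x hx
      apply Subtype.ext
      show p (ix (p (ix x + 1)) - 1) = x
      rw [hix]
      simp only [Nat.add_sub_cancel]
      exact hpx
    · rintro ⟨y, hy⟩
      obtain ⟨h1, h2, hpy⟩ := htix y hy
      apply Subtype.ext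
      show p (ix (p (ix y - 1)) + 1) = y
      rw [hix, show ix y - 1 + 1 = ix y by omega]
      exact hpy
    · rintro ⟨x, hx⟩ ⟨y, hy⟩
      obtain ⟨hltx, hpx⟩ := hsix x hx
      obtain ⟨hlty, hpy⟩ := hsix y hy
      show G.Adj (p (ix x + 1)) (p (ix y + 1)) ↔ G.Adj x y
      have hxy := hadj (ix x) (ix y)
      rw [hpx, hpy] at hxy
      rw [hadj (ix x + 1) (ix y + 1), hxy]
      omega
  obtain ⟨γ, α, hext⟩ := hT s t hsfin htfin hscard htcard hsconn htconn hiso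
  -- endpoints
  have hkpos : 0 < k := by omega
  set c0 : ↥s := ⟨p 0, hsmem 0 hkpos⟩ with hc0
  set c1 : ↥s := ⟨p 1, hsmem 1 (by omega)⟩ with hc1
  obtain ⟨r1, hr11, hr1k, hr1val⟩ : ∃ r, 1 ≤ r ∧ r ≤ k ∧ (γ c0).1 = p r := by
    obtain ⟨i, hi, hval⟩ := (γ c0).2
    exact ⟨i + 1, by omega, by have := Set.mem_Iio.mp hi; omega, hval.symm⟩
  obtain ⟨r2, hr21, hr2k, hr2val⟩ : ∃ r, 1 ≤ r ∧ r ≤ k ∧ (γ c1).1 = p r := by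
    obtain ⟨i, hi, hval⟩ := (γ c1).2
    exact ⟨i + 1, by omega, by have := Set.mem_Iio.mp hi; omega, hval.symm⟩
  -- endpoint claim: r1 = 1 or r1 = k
  have hsymm_nbr : ∀ u : ↥t, (G.induce t).Adj u (γ c0) → (γ.symm u).1 = p 1 := by
    intro u hu
    have h2 : (G.induce s).Adj (γ.symm u) c0 := by
      have := γ.symm.map_rel_iff.mpr hu
      rwa [γ.symm_apply_apply] at this
    obtain ⟨m, hm, hmval⟩ := (γ.symm u).2
    have hadj2 : G.Adj ((γ.symm u).1) (p 0) := h2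
    rw [← hmval] at hadj2 ⊢
    have := (hadj m 0).mp hadj2
    have hm1 : m = 1 := by omega
    rw [hm1]
  have hr1ends : r1 = 1 ∨ r1 = k := by
    by_contra hcon
    push_neg at hcon
    have h2r : 2 ≤ r1 := by omega
    have hrk : r1 ≤ k - 1 := by omega
    set u1 : ↥t := ⟨p (r1 - 1), htmem _ (by omega) (by omega)⟩ with hu1
    set u2 : ↥t := ⟨p (r1 + 1), htmem _ (by omega) (by omega)⟩ with hu2
    have hadj1 : (G.induce t).Adj u1 (γ c0) := by
      show G.Adj (p (r1 - 1)) (γ c0).1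
      rw [hr1val]
      exact (hadj (r1 - 1) r1).mpr (Or.inl (by omega))
    have hadj2 : (G.induce t).Adj u2 (γ c0) := by
      show G.Adj (p (r1 + 1)) (γ c0).1
      rw [hr1val]
      exact (hadj (r1 + 1) r1).mpr (Or.inr rfl)
    have e1 := hsymm_nbr u1 hadj1
    have e2 := hsymm_nbr u2 hadj2
    have : γ.symm u1 = γ.symm u2 := Subtype.ext (e1.trans e2.symm)
    have : u1 = u2 := by
      have := congrArg γ this
      rwa [γ.apply_symm_apply, γ.apply_symm_apply] at this
    have : p (r1 - 1) = p (r1 + 1) := congrArg Subtype.val this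
    have := hinj _ _ this
    omega
  -- neighbor relation between r1 and r2
  have hadj01 : (G.induce t).Adj (γ c0) (γ c1) := by
    refine γ.map_rel_iff.mpr ?_
    show G.Adj (p 0) (p 1)
    exact (hadj 0 1).mpr (Or.inl rfl)
  have hr12 : r2 = r1 + 1 ∨ r1 = r2 + 1 := by
    have : G.Adj (p r1) (p r2) := by
      have : G.Adj (γ c0).1 (γ c1).1 := hadj01
      rwa [hr1val, hr2val] at this
    exact (hadj r1 r2).mp this
  -- α images
  have hα0 : α (p 0) = p r1 := by
    have := hext c0
    rw [this, hr1val]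
  have hα1 : α (p 1) = p r2 := by
    have := hext c1
    rw [this, hr2val]
  -- block argument
  set D : Set V := α '' (Bl 0) with hD_def
  have hDblock : IsBlock G D := isblock_image α (hblk 0)
  have hDcard : #D = 2 := by
    rw [hD_def, card_image, hcard 0, if_pos (Even.zero)]
  have hD0 : p r1 ∈ D := ⟨p 0, hmem0 0, hα0⟩
  have hD1 : p r2 ∈ D := ⟨p 1, hmem1 0, hα1⟩
  have hfinal : ∀ m, p m ∈ D → p (m+1) ∈ D → ¬ Even m → False := by
    intro m hm hm1 hodd
    have heq : D = Bl m :=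
      blocks_eq_of_two_shared hDblock (hblk m) hm (hmem0 m) hm1 (hmem1 m)
        (fun h => by have := hinj _ _ h; omega)
    have := hcard m
    rw [← heq, hDcard, if_neg hodd] at this
    exact h2κ this
  obtain ⟨a, ha⟩ := hkeven
  rcases hr1ends with h1 | h1
  · have hr2 : r2 = 2 := by rcases hr12 with h2 | h2 <;> omega
    rw [h1] at hD0
    rw [hr2] at hD1
    exact hfinal 1 hD0 hD1 (by rintro ⟨b, hb⟩; omega)
  · have hr2 : r2 = k - 1 := by rcases hr12 with h2 | h2 <;> omega
    rw [hr2] at hD1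
    rw [h1] at hD0
    refine hfinal (k-1) hD1 ?_ (by rintro ⟨b, hb⟩; omega)
    rw [show k - 1 + 1 = k by omega]
    exact hD0
end
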